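/- If x₁, …, x_N and X are independent uniformly distributed random points in a Euclidean ball of radius R in ℝ^s, then the expected value of min_{1≤i≤N} |X − xᵢ| is asymptotically equal to (Γ(1/s)/s) · R / N^{1/s} as N → ∞; i.e., the ratio of E[min_i |X − xᵢ|] to (Γ(1/s)/s) R N^{−1/s} tends to 1. -/

import Mathlib

/-!
Condition on the query point `X = x`. The nearest of `N` independent samples is farther than `t`
exactly when all of them avoid `closedBall x t`, so by the layer-cake formula
`E[min_i |x - xᵢ|] = ∫₀^∞ (1 - P(closedBall x t))^N dt`. Substitute `t = R u / N^(1/d)`.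
If `x` lies in the open ball, then for large `N` the ball `closedBall x t` lies inside the support,
its probability is `u^d / N`, and the integrand `(1 - u^d / N)^N` tends to `exp (-u^d)`, whose
integral is `Γ(1/d + 1) = Γ(1/d) / d`. For every `x` in the closed ball a smaller ball of radius
`t / 2` fits into both balls, so `P(closedBall x t) ≥ (t / 2R)^d` and the integrand is dominated by
`exp (-(u/2)^d)` uniformly in `N` and `x`. Dominated convergence in `u` and then in `x` concludes.
-/

open MeasureTheory Metric Filter Set ProbabilityTheory Module Topology

lemma ae_pi_forall_mem {X ι : Type*} [MeasurableSpace X] [Fintype ι] {ν : Measure X}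
    [SigmaFinite ν] {s : Set X} (hν : ∀ᵐ y ∂ν, y ∈ s) :
    ∀ᵐ y ∂Measure.pi (fun _ : ι => ν), ∀ i, y i ∈ s :=
  ae_all_iff.2 fun _ => Measure.tendsto_eval_ae_ae.eventually hν

section NearestNeighbour

variable {X : Type*} [PseudoMetricSpace X] {ι : Type*} [Fintype ι]

lemma lt_iInf_dist_iff [Nonempty ι] {x : X} {y : ι → X} {t : ℝ} :
    t < ⨅ i, dist x (y i) ↔ ∀ i, t < dist x (y i) := by
  refine ⟨fun h i => h.trans_le (ciInf_le (finite_range _).bddBelow i), fun h => ?_⟩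
  obtain ⟨i, hi⟩ := exists_eq_ciInf_of_finite (f := fun i => dist x (y i))
  exact hi ▸ h i

lemma iInf_dist_le_of_mem_closedBall [Nonempty ι] {x c : X} {r : ℝ} {y : ι → X}
    (hy : ∀ i, y i ∈ closedBall c r) : ⨅ i, dist x (y i) ≤ dist x c + r := by
  obtain ⟨i⟩ := ‹Nonempty ι›
  exact (ciInf_le (finite_range _).bddBelow i).trans
    ((dist_triangle _ c _).trans (add_le_add_right (by simpa [dist_comm] using hy i) _))

variable [MeasurableSpace X]

lemma measurable_one_sub_measureReal_closedBall_pow (ν : Measure X) [IsFiniteMeasure ν] (x : X)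
    (N : ℕ) : Measurable fun t => (1 - ν.real (closedBall x t)) ^ N := by
  have : Monotone fun t => ν.real (closedBall x t) := fun _ _ hst =>
    measureReal_mono (closedBall_subset_closedBall hst)
  exact (measurable_const.sub this.measurable).pow_const N

variable [OpensMeasurableSpace X] [SecondCountableTopology X] {ν : Measure X}
  [IsProbabilityMeasure ν] {c : X} {r : ℝ}

lemma measurable_iInf_dist :
    Measurable fun p : X × (ι → X) => ⨅ i, dist p.1 (p.2 i) :=
  Measurable.iInf fun i => measurable_fst.dist ((measurable_pi_apply i).comp measurable_snd)

lemma integrable_iInf_dist [Nonempty ι] (hν : ∀ᵐ y ∂ν, y ∈ closedBall c r) (x : X) :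
    Integrable (fun y : ι → X => ⨅ i, dist x (y i)) (Measure.pi fun _ => ν) := by
  refine Integrable.of_bound (C := dist x c + r)
    (measurable_iInf_dist.comp measurable_prodMk_left).aestronglyMeasurable ?_
  filter_upwards [ae_pi_forall_mem hν] with y hy
  rw [Real.norm_of_nonneg (Real.iInf_nonneg fun _ => dist_nonneg)]
  exact iInf_dist_le_of_mem_closedBall hy

lemma integrable_prod_iInf_dist [Nonempty ι] (hν : ∀ᵐ y ∂ν, y ∈ closedBall c r) :
    Integrable (fun p : X × (ι → X) => ⨅ i, dist p.1 (p.2 i))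
      (ν.prod (Measure.pi fun _ => ν)) := by
  refine Integrable.of_bound (C := r + r) measurable_iInf_dist.aestronglyMeasurable ?_
  filter_upwards [Measure.quasiMeasurePreserving_fst.ae hν,
    Measure.quasiMeasurePreserving_snd.ae (ae_pi_forall_mem (ι := ι) hν)] with p hx hy
  rw [Real.norm_of_nonneg (Real.iInf_nonneg fun _ => dist_nonneg)]
  exact (iInf_dist_le_of_mem_closedBall hy).trans (add_le_add_left hx _)

theorem integral_iInf_dist_eq_integral_one_sub_pow [Nonempty ι]
    (hν : ∀ᵐ y ∂ν, y ∈ closedBall c r) (x : X) :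
    ∫ y : ι → X, ⨅ i, dist x (y i) ∂Measure.pi (fun _ => ν) =
      ∫ t in Ioi 0, (1 - ν.real (closedBall x t)) ^ Fintype.card ι := by
  rw [(integrable_iInf_dist hν x).integral_eq_integral_meas_lt
    (ae_of_all _ fun _ => Real.iInf_nonneg fun _ => dist_nonneg)]
  refine setIntegral_congr_fun measurableSet_Ioi fun t _ => ?_
  have hpi : {y : ι → X | t < ⨅ i, dist x (y i)} = univ.pi fun _ => (closedBall x t)ᶜ := by
    ext y
    simp [lt_iInf_dist_iff, dist_comm]
  rw [hpi, measureReal_def, Measure.pi_pi, Finset.prod_const, Finset.card_univ,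
    prob_compl_eq_one_sub measurableSet_closedBall, ENNReal.toReal_pow,
    ENNReal.toReal_sub_of_le prob_le_one ENNReal.one_ne_top, ENNReal.toReal_one, measureReal_def]

theorem integral_iInf_dist_last_eq_integral_integral (hν : ∀ᵐ y ∂ν, y ∈ closedBall c r)
    {N : ℕ} (hN : N ≠ 0) :
    ∫ ω : Fin (N + 1) → X, ⨅ i : Fin N, dist (ω (Fin.last N)) (ω i.castSucc)
        ∂Measure.pi (fun _ => ν) =
      ∫ x, ∫ y : Fin N → X, ⨅ i, dist x (y i) ∂Measure.pi (fun _ => ν) ∂ν := by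
  have : Nonempty (Fin N) := Fin.pos_iff_nonempty.1 (Nat.pos_of_ne_zero hN)
  rw [← integral_prod _ (integrable_prod_iInf_dist hν),
    ← (measurePreserving_piFinSuccAbove (fun _ => ν) (Fin.last N)).integral_comp
      (MeasurableEquiv.measurableEmbedding _)]
  simp [MeasurableEquiv.piFinSuccAbove_apply, Fin.init]

end NearestNeighbour

lemma ProbabilityTheory.cond_real_apply {Ω : Type*} [MeasurableSpace Ω] (μ : Measure Ω)
    {s : Set Ω} (hs : MeasurableSet s) (t : Set Ω) :
    μ[|s].real t = μ.real (s ∩ t) / μ.real s := by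
  rw [measureReal_def, cond_apply hs, ENNReal.toReal_mul, ENNReal.toReal_inv, div_eq_inv_mul,
    measureReal_def, measureReal_def]

section HaarBall

variable {E : Type*} [NormedAddCommGroup E] [NormedSpace ℝ E] [FiniteDimensional ℝ E]
  [MeasurableSpace E] (μ : Measure E) [μ.IsAddHaarMeasure] {c x : E} {R t : ℝ}

lemma isProbabilityMeasure_cond_closedBall (hR : 0 < R) :
    IsProbabilityMeasure μ[|closedBall c R] :=
  cond_isProbabilityMeasure_of_finite (measure_closedBall_pos μ c hR).ne'
    measure_closedBall_lt_top.ne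

lemma measureReal_closedBall_pos (c : E) (hR : 0 < R) : 0 < μ.real (closedBall c R) :=
  ENNReal.toReal_pos (measure_closedBall_pos μ c hR).ne' measure_closedBall_lt_top.ne

variable [BorelSpace E]

lemma cond_closedBall_real_of_subset (hR : 0 < R) (ht : 0 ≤ t)
    (h : closedBall x t ⊆ closedBall c R) :
    μ[|closedBall c R].real (closedBall x t) = (t / R) ^ finrank ℝ E := by
  have hB := measureReal_closedBall_pos μ (0 : E) one_pos
  rw [cond_real_apply μ measurableSet_closedBall, inter_eq_right.2 h,
    Measure.addHaar_real_closedBall' μ _ ht, Measure.addHaar_real_closedBall' μ _ hR.le, div_pow]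
  field_simp

lemma cond_closedBall_real_of_superset (hR : 0 < R) (h : closedBall c R ⊆ closedBall x t) :
    μ[|closedBall c R].real (closedBall x t) = 1 := by
  rw [cond_real_apply μ measurableSet_closedBall, inter_eq_left.2 h,
    div_self (measureReal_closedBall_pos μ c hR).ne']

/-- The ball of radius `t / 2` around the point at fraction `t / (2R)` of the way from `x` to `c`
lies in both balls. -/
lemma div_pow_le_cond_closedBall_real (hR : 0 < R) (hx : x ∈ closedBall c R) (ht : 0 ≤ t)
    (htR : t ≤ 2 * R) :
    (t / (2 * R)) ^ finrank ℝ E ≤ μ[|closedBall c R].real (closedBall x t) := by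
  have := isProbabilityMeasure_cond_closedBall μ (c := c) hR
  set θ := t / (2 * R)
  have hθ : θ * R = t / 2 := by simp only [θ]; field_simp
  have hθ1 : θ ≤ 1 := (div_le_one (by positivity)).2 htR
  have hxc : dist x c ≤ R := hx
  set p := AffineMap.lineMap x c θ
  have hpc : closedBall p (t / 2) ⊆ closedBall c R := by
    refine closedBall_subset_closedBall' ?_
    rw [dist_lineMap_right, Real.norm_of_nonneg (by linarith)]
    nlinarith
  have hpx : closedBall p (t / 2) ⊆ closedBall x t := by
    refine closedBall_subset_closedBall' ?_
    rw [dist_lineMap_left, Real.norm_of_nonneg (by positivity)]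
    nlinarith
  calc θ ^ finrank ℝ E = μ[|closedBall c R].real (closedBall p (t / 2)) := by
        rw [cond_closedBall_real_of_subset μ hR (by positivity) hpc, div_div]
    _ ≤ μ[|closedBall c R].real (closedBall x t) := measureReal_mono hpx

lemma one_sub_cond_closedBall_real_le_exp (hR : 0 < R) (hx : x ∈ closedBall c R) (ht : 0 ≤ t) :
    1 - μ[|closedBall c R].real (closedBall x t) ≤
      Real.exp (-(t / (2 * R)) ^ finrank ℝ E) := by
  rcases le_or_gt t (2 * R) with htR | htR
  · have := div_pow_le_cond_closedBall_real μ hR hx ht htR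
    have := Real.add_one_le_exp (-(t / (2 * R)) ^ finrank ℝ E)
    linarith
  · have hsup : closedBall c R ⊆ closedBall x t := by
      refine closedBall_subset_closedBall' ?_
      linarith [mem_closedBall'.1 hx]
    rw [cond_closedBall_real_of_superset μ hR hsup, sub_self]
    exact (Real.exp_pos _).le

end HaarBall

lemma integrableOn_exp_neg_div_two_pow {d : ℕ} (hd : d ≠ 0) :
    IntegrableOn (fun u : ℝ => Real.exp (-(u / 2) ^ d)) (Ioi 0) := by
  refine (integrableOn_rpow_mul_exp_neg_mul_rpow (s := 0) (p := d) (b := 2⁻¹ ^ d)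
    (by norm_num) (by positivity) (by positivity)).congr_fun (fun u _ => ?_) measurableSet_Ioi
  simp [Real.rpow_natCast, div_eq_mul_inv, mul_pow, mul_comm]

noncomputable def natRoot (d N : ℕ) : ℝ := (N : ℝ) ^ ((1 : ℝ) / d)

lemma natRoot_pos {d N : ℕ} (hN : N ≠ 0) : 0 < natRoot d N :=
  Real.rpow_pos_of_pos (Nat.cast_pos.2 (Nat.pos_of_ne_zero hN)) _

lemma natRoot_pow {d : ℕ} (hd : d ≠ 0) (N : ℕ) : natRoot d N ^ d = N := by
  rw [natRoot, one_div, Real.rpow_inv_natCast_pow (Nat.cast_nonneg N) hd]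

lemma tendsto_natRoot_atTop {d : ℕ} (hd : d ≠ 0) : Tendsto (natRoot d) atTop atTop :=
  (tendsto_rpow_atTop (by positivity)).comp tendsto_natCast_atTop_atTop

section Asymptotics

variable {E : Type*} [NormedAddCommGroup E] [NormedSpace ℝ E] [FiniteDimensional ℝ E]
  [MeasurableSpace E] [BorelSpace E] (μ : Measure E) [μ.IsAddHaarMeasure] {c x : E} {R : ℝ}
  {N : ℕ}

lemma natRoot_div_mul_integral_iInf_dist_eq (hR : 0 < R) (hN : N ≠ 0) :
    natRoot (finrank ℝ E) N / R *
        ∫ y : Fin N → E, ⨅ i, dist x (y i) ∂Measure.pi (fun _ => μ[|closedBall c R]) =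
      ∫ u in Ioi 0,
        (1 - μ[|closedBall c R].real (closedBall x (R / natRoot (finrank ℝ E) N * u))) ^ N := by
  have := isProbabilityMeasure_cond_closedBall μ (c := c) hR
  have : Nonempty (Fin N) := ⟨⟨0, Nat.pos_of_ne_zero hN⟩⟩
  have hb : 0 < R / natRoot (finrank ℝ E) N := div_pos hR (natRoot_pos hN)
  rw [integral_iInf_dist_eq_integral_one_sub_pow (ae_cond_mem measurableSet_closedBall) x,
    Fintype.card_fin, integral_comp_mul_left_Ioi
      (fun t => (1 - μ[|closedBall c R].real (closedBall x t)) ^ N) 0 hb,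
    mul_zero, smul_eq_mul, inv_div]

variable [Nontrivial E]

lemma one_sub_cond_closedBall_real_pow_le (hR : 0 < R) (hx : x ∈ closedBall c R) (hN : N ≠ 0)
    {u : ℝ} (hu : 0 ≤ u) :
    (1 - μ[|closedBall c R].real (closedBall x (R / natRoot (finrank ℝ E) N * u))) ^ N ≤
      Real.exp (-(u / 2) ^ finrank ℝ E) := by
  have := isProbabilityMeasure_cond_closedBall μ (c := c) hR
  have hq := natRoot_pos (d := finrank ℝ E) hN
  calc _ ≤ Real.exp (-(R / natRoot (finrank ℝ E) N * u / (2 * R)) ^ finrank ℝ E) ^ N :=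
        pow_le_pow_left₀ (sub_nonneg.2 measureReal_le_one)
          (one_sub_cond_closedBall_real_le_exp μ hR hx (by positivity)) N
    _ = Real.exp (-(u / 2) ^ finrank ℝ E) := by
        rw [← Real.exp_nat_mul, show R / natRoot (finrank ℝ E) N * u / (2 * R) =
          u / 2 / natRoot (finrank ℝ E) N by field_simp, div_pow, natRoot_pow finrank_pos.ne']
        field_simp

lemma tendsto_one_sub_cond_closedBall_real_pow (hR : 0 < R) (hx : x ∈ ball c R) {u : ℝ}
    (hu : 0 ≤ u) :
    Tendsto (fun N : ℕ =>
      (1 - μ[|closedBall c R].real (closedBall x (R / natRoot (finrank ℝ E) N * u))) ^ N)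
      atTop (𝓝 (Real.exp (-u ^ finrank ℝ E))) := by
  have hrad : Tendsto (fun N : ℕ => R / natRoot (finrank ℝ E) N * u) atTop (𝓝 0) := by
    simpa using (tendsto_const_nhds.div_atTop (tendsto_natRoot_atTop finrank_pos.ne')).mul_const u
  refine (Real.tendsto_one_add_div_pow_exp _).congr' ?_
  filter_upwards [hrad.eventually_le_const (sub_pos.2 (mem_ball.1 hx)), eventually_ne_atTop 0]
    with N hN hN0
  have hq := natRoot_pos (d := finrank ℝ E) hN0
  rw [cond_closedBall_real_of_subset μ hR (by positivity)
      (closedBall_subset_closedBall' (by linarith)),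
    show R / natRoot (finrank ℝ E) N * u / R = u / natRoot (finrank ℝ E) N by field_simp,
    div_pow, natRoot_pow finrank_pos.ne']
  ring

lemma ae_cond_closedBall_mem_ball : ∀ᵐ x ∂μ[|closedBall c R], x ∈ ball c R := by
  filter_upwards [ae_cond_mem measurableSet_closedBall, cond_absolutelyContinuous.ae_le
    (measure_eq_zero_iff_ae_notMem.1 (Measure.addHaar_sphere μ c R))] with x hx hxs
  exact lt_of_le_of_ne hx hxs

lemma natRoot_div_mul_integral_iInf_dist_le (hR : 0 < R) (hx : x ∈ closedBall c R)
    (hN : N ≠ 0) :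
    natRoot (finrank ℝ E) N / R *
        ∫ y : Fin N → E, ⨅ i, dist x (y i) ∂Measure.pi (fun _ => μ[|closedBall c R]) ≤
      ∫ u in Ioi 0, Real.exp (-(u / 2) ^ finrank ℝ E) := by
  have := isProbabilityMeasure_cond_closedBall μ (c := c) hR
  rw [natRoot_div_mul_integral_iInf_dist_eq μ hR hN]
  refine integral_mono_of_nonneg
    (ae_of_all _ fun u => pow_nonneg (sub_nonneg.2 measureReal_le_one) N)
    (integrableOn_exp_neg_div_two_pow finrank_pos.ne') ?_
  filter_upwards [self_mem_ae_restrict measurableSet_Ioi] with u hu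
  exact one_sub_cond_closedBall_real_pow_le μ hR hx hN (le_of_lt hu)

theorem tendsto_natRoot_div_mul_integral_iInf_dist_of_mem_ball (hR : 0 < R) (hx : x ∈ ball c R) :
    Tendsto (fun N : ℕ => natRoot (finrank ℝ E) N / R *
        ∫ y : Fin N → E, ⨅ i, dist x (y i) ∂Measure.pi (fun _ => μ[|closedBall c R]))
      atTop (𝓝 (Real.Gamma (1 / finrank ℝ E + 1))) := by
  have := isProbabilityMeasure_cond_closedBall μ (c := c) hR
  have hd : finrank ℝ E ≠ 0 := finrank_pos.ne'
  have hΓ :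
      ∫ u in Ioi 0, Real.exp (-u ^ finrank ℝ E) = Real.Gamma (1 / finrank ℝ E + 1) := by
    simpa only [Real.rpow_natCast] using integral_exp_neg_rpow (Nat.cast_pos.2 hd.bot_lt)
  refine Tendsto.congr' (f₁ := fun N : ℕ => ∫ u in Ioi 0, (1 - μ[|closedBall c R].real
      (closedBall x (R / natRoot (finrank ℝ E) N * u))) ^ N) ?_ ?_
  · filter_upwards [eventually_ne_atTop 0] with N hN
    exact (natRoot_div_mul_integral_iInf_dist_eq μ hR hN).symm
  rw [← hΓ]
  refine tendsto_integral_filter_of_dominated_convergence _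
    (Eventually.of_forall fun N => ((measurable_one_sub_measureReal_closedBall_pow _ x N).comp
      (measurable_const_mul _)).aestronglyMeasurable) ?_
    (integrableOn_exp_neg_div_two_pow hd) ?_
  · filter_upwards [eventually_ne_atTop 0] with N hN
    filter_upwards [self_mem_ae_restrict measurableSet_Ioi] with u hu
    rw [Real.norm_of_nonneg (pow_nonneg (sub_nonneg.2 measureReal_le_one) N)]
    exact one_sub_cond_closedBall_real_pow_le μ hR (ball_subset_closedBall hx) hN (le_of_lt hu)
  · filter_upwards [self_mem_ae_restrict measurableSet_Ioi] with u hu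
    exact tendsto_one_sub_cond_closedBall_real_pow μ hR hx (le_of_lt hu)

theorem tendsto_natRoot_div_mul_integral_iInf_dist (hR : 0 < R) :
    Tendsto (fun N : ℕ => natRoot (finrank ℝ E) N / R *
        ∫ ω : Fin (N + 1) → E, ⨅ i : Fin N, dist (ω (Fin.last N)) (ω i.castSucc)
          ∂Measure.pi (fun _ => μ[|closedBall c R]))
      atTop (𝓝 (Real.Gamma (1 / finrank ℝ E + 1))) := by
  have := isProbabilityMeasure_cond_closedBall μ (c := c) hR
  have hlim := tendsto_integral_filter_of_dominated_convergence (μ := μ[|closedBall c R])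
    (F := fun (N : ℕ) x => natRoot (finrank ℝ E) N / R *
        ∫ y : Fin N → E, ⨅ i, dist x (y i) ∂Measure.pi (fun _ => μ[|closedBall c R]))
    (fun _ => ∫ u in Ioi 0, Real.exp (-(u / 2) ^ finrank ℝ E))
    (Eventually.of_forall fun N => (measurable_iInf_dist.stronglyMeasurable.integral_prod_right'
      |>.const_mul _).aestronglyMeasurable)
    ?_ (integrable_const _)
    ((ae_cond_closedBall_mem_ball μ).mono fun x hx =>
      tendsto_natRoot_div_mul_integral_iInf_dist_of_mem_ball μ hR hx)
  · rw [integral_const, probReal_univ, one_smul] at hlim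
    refine hlim.congr' ?_
    filter_upwards [eventually_ne_atTop 0] with N hN
    rw [integral_iInf_dist_last_eq_integral_integral (ae_cond_mem measurableSet_closedBall) hN,
      integral_const_mul]
  · filter_upwards [eventually_ne_atTop 0] with N hN
    filter_upwards [ae_cond_mem measurableSet_closedBall] with x hx
    rw [Real.norm_of_nonneg (mul_nonneg (div_nonneg (natRoot_pos hN).le hR.le)
      (integral_nonneg fun _ => Real.iInf_nonneg fun _ => dist_nonneg))]
    exact natRoot_div_mul_integral_iInf_dist_le μ hR hx hN

end Asymptotics

/-- If `x₁, …, x_N` and `X` are i.i.d. uniform on a ball of radius `R` in `ℝ^s`, the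
expected nearest distance `E[min_i |X − xᵢ|]` is asymptotic to `(Γ(1/s)/s) · R / N^(1/s)`
as `N → ∞`. -/
theorem stmt_10 (s : ℕ) (hs : 1 ≤ s) (R : ℝ) (hR : 0 < R) :
    Tendsto (fun N : ℕ =>
      (∫ ω : Fin (N + 1) → EuclideanSpace ℝ (Fin s),
          (⨅ i : Fin N, dist (ω (Fin.last N)) (ω i.castSucc))
        ∂(Measure.pi fun _ : Fin (N + 1) =>
            (volume (closedBall (0 : EuclideanSpace ℝ (Fin s)) R))⁻¹ •
              volume.restrict (closedBall (0 : EuclideanSpace ℝ (Fin s)) R))) /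
        ((Real.Gamma (1 / s) / s) * R / (N : ℝ) ^ ((1 : ℝ) / s)))
      atTop (nhds 1) := by
  have hd : finrank ℝ (EuclideanSpace ℝ (Fin s)) = s := finrank_euclideanSpace_fin
  have : Nontrivial (EuclideanSpace ℝ (Fin s)) :=
    Module.nontrivial_of_finrank_pos (R := ℝ) (by omega)
  have hΓ : Real.Gamma (1 / s + 1) = Real.Gamma (1 / s) / s := by
    rw [Real.Gamma_add_one (by positivity), one_div, inv_mul_eq_div]
  have hlim := (tendsto_natRoot_div_mul_integral_iInf_dist
    (volume : Measure (EuclideanSpace ℝ (Fin s))) (c := 0) hR).div_const (Real.Gamma (1 / s + 1))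
  rw [hd, div_self (Real.Gamma_pos_of_pos (by positivity)).ne', hΓ] at hlim
  refine hlim.congr' ?_
  filter_upwards [eventually_ne_atTop 0] with N hN
  unfold natRoot ProbabilityTheory.cond
  field_simp
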